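/- arXiv:hep-th/0203214 — 4 statements merged into one kernel-verified Lean document; each statement's English description precedes it below -/
import Mathlib

section
/- The map F from the abstract Lie algebra generated by elements L_{kl}, M_{kl}, N_{kl}, R_{kl} (k,l = 1,...,N) with bracket (1/i)[·,·] and relations (1/i)[L_{kl},L_{mn}]=0, (1/i)[L_{kl},M_{mn}]=2ℏδ_{kn}L_{ml}, (1/i)[L_{kl},N_{mn}]=2ℏδ_{ml}L_{kn}, (1/i)[L_{kl},R_{mn}]=2ℏ(δ_{kn}N_{ml}+δ_{ml}M_{kn}), (1/i)[M_{kl},M_{mn}]=2ℏ(δ_{kn}M_{ml}−δ_{ml}M_{kn}), (1/i)[M_{kl},N_{mn}]=0, (1/i)[M_{kl},R_{mn}]=2ℏδ_{kn}R_{ml}, (1/i)[N_{kl},N_{mn}]=2ℏ(δ_{ml}N_{kn}−δ_{kn}N_{ml}), (1/i)[N_{kl},R_{mn}]=2ℏδ_{ml}R_{kn}, (1/i)[R_{kl},R_{mn}]=0, into gl(2N,ℂ), defined by F(L_{kl}) = (1/i)·block[[−E_{kl}, iE_{kl}],[iE_{kl}, E_{kl}]], F(M_{kl}) = (ℏ/i)·block[[−iE_{kl},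 E_{kl}],[−E_{kl}, −iE_{kl}]], F(N_{kl}) = (ℏ/i)·block[[iE_{kl}, E_{kl}],[−E_{kl}, iE_{kl}]], F(R_{kl}) = (ℏ²/i)·block[[−E_{kl}, −iE_{kl}],[−iE_{kl}, E_{kl}]], is a homomorphism of complex Lie algebras: F((1/i)[X,Y]) = [F(X),F(Y)] for all generators X,Y. -/
/-!
Each image `F(X_{kl})` is a Kronecker product `A_X ⊗ E_{kl}` of a fixed `2 × 2` matrix `A_X`
with a matrix unit, written in block form. Since `(A ⊗ E_{kl}) (B ⊗ E_{mn}) = δ_{lm} (A B) ⊗ E_{kn}`,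
the commutator of two such matrices is `δ_{ml} (A B) ⊗ E_{kn} − δ_{kn} (B A) ⊗ E_{ml}`, so all ten
relations follow from the multiplication table of `A_L, A_M, A_N, A_R`: the matrices `A_M` and
`A_N` are `−2ℏ` and `2ℏ` times complementary idempotents, while `A_L` and `A_R` square to zero,
with `A_L A_R = 2ℏ A_M` and `A_R A_L = −2ℏ A_N`.
-/

open Matrix Complex

noncomputable section

/-- Matrix units `E_{kl}` of `gl(N,ℂ)`. -/
def Ekl (N : ℕ) (k l : Fin N) : Matrix (Fin N) (Fin N) ℂ := Matrix.single k l 1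

/-- Kronecker delta as a complex scalar. -/
def kd (N : ℕ) (k l : Fin N) : ℂ := if k = l then 1 else 0

/-- `F(L_{kl}) = (1/i)·[[−E_{kl}, iE_{kl}],[iE_{kl}, E_{kl}]]`. -/
def FL (N : ℕ) (k l : Fin N) : Matrix (Fin N ⊕ Fin N) (Fin N ⊕ Fin N) ℂ :=
  I⁻¹ • fromBlocks (-(Ekl N k l)) (I • Ekl N k l) (I • Ekl N k l) (Ekl N k l)

/-- `F(M_{kl}) = (ℏ/i)·[[−iE_{kl}, E_{kl}],[−E_{kl}, −iE_{kl}]]`. -/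
def FM (N : ℕ) (ℏ : ℝ) (k l : Fin N) : Matrix (Fin N ⊕ Fin N) (Fin N ⊕ Fin N) ℂ :=
  ((ℏ : ℂ) / I) • fromBlocks (-(I • Ekl N k l)) (Ekl N k l) (-(Ekl N k l)) (-(I • Ekl N k l))

/-- `F(N_{kl}) = (ℏ/i)·[[iE_{kl}, E_{kl}],[−E_{kl}, iE_{kl}]]`. -/
def FNg (N : ℕ) (ℏ : ℝ) (k l : Fin N) : Matrix (Fin N ⊕ Fin N) (Fin N ⊕ Fin N) ℂ :=
  ((ℏ : ℂ) / I) • fromBlocks (I • Ekl N k l) (Ekl N k l) (-(Ekl N k l)) (I • Ekl N k l)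

/-- `F(R_{kl}) = (ℏ²/i)·[[−E_{kl}, −iE_{kl}],[−iE_{kl}, E_{kl}]]`. -/
def FR (N : ℕ) (ℏ : ℝ) (k l : Fin N) : Matrix (Fin N ⊕ Fin N) (Fin N ⊕ Fin N) ℂ :=
  ((ℏ : ℂ) ^ 2 / I) • fromBlocks (-(Ekl N k l)) (-(I • Ekl N k l)) (-(I • Ekl N k l)) (Ekl N k l)

section BlockKron

variable {R : Type*} [CommRing R] {m n p : Type*}

def blockKron (A : Matrix (Fin 2) (Fin 2) R) (X : Matrix m n R) : Matrix (m ⊕ m) (n ⊕ n) R :=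
  fromBlocks (A 0 0 • X) (A 0 1 • X) (A 1 0 • X) (A 1 1 • X)

theorem blockKron_mul [Fintype n] (A B : Matrix (Fin 2) (Fin 2) R) (X : Matrix m n R)
    (Y : Matrix n p R) : blockKron A X * blockKron B Y = blockKron (A * B) (X * Y) := by
  simp only [blockKron, fromBlocks_multiply, Matrix.smul_mul, Matrix.mul_smul, smul_smul,
    ← add_smul, mul_apply, Fin.sum_univ_two]
  congr 2 <;> ring

theorem blockKron_smul_left (c : R) (A : Matrix (Fin 2) (Fin 2) R) (X : Matrix m n R) :
    blockKron (c • A) X = c • blockKron A X := by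
  simp only [blockKron, fromBlocks_smul, Matrix.smul_apply, smul_eq_mul, mul_smul]

theorem blockKron_smul_right (c : R) (A : Matrix (Fin 2) (Fin 2) R) (X : Matrix m n R) :
    blockKron A (c • X) = c • blockKron A X := by
  simp only [blockKron, fromBlocks_smul, smul_comm c]

theorem blockKron_zero_left (X : Matrix m n R) : blockKron 0 X = 0 := by
  simp only [blockKron, Matrix.zero_apply, zero_smul, fromBlocks_zero]

end BlockKron

section MatrixUnits

variable {N : ℕ}

theorem kd_comm (k l : Fin N) : kd N k l = kd N l k := by
  simp only [kd, eq_comm]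

theorem Ekl_mul_Ekl (k l m n : Fin N) : Ekl N k l * Ekl N m n = kd N l m • Ekl N k n := by
  by_cases h : l = m
  · subst h
    simp [Ekl, kd]
  · simp [Ekl, kd, h]

theorem blockKron_Ekl_commutator (A B : Matrix (Fin 2) (Fin 2) ℂ) (k l m n : Fin N) :
    blockKron A (Ekl N k l) * blockKron B (Ekl N m n)
        - blockKron B (Ekl N m n) * blockKron A (Ekl N k l)
      = kd N m l • blockKron (A * B) (Ekl N k n) - kd N k n • blockKron (B * A) (Ekl N m l) := by
  rw [blockKron_mul, blockKron_mul, Ekl_mul_Ekl, Ekl_mul_Ekl, blockKron_smul_right,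
    blockKron_smul_right, kd_comm l m, kd_comm n k]

end MatrixUnits

def symbolL : Matrix (Fin 2) (Fin 2) ℂ := I⁻¹ • !![-1, I; I, 1]

def symbolM (ℏ : ℝ) : Matrix (Fin 2) (Fin 2) ℂ := ((ℏ : ℂ) / I) • !![-I, 1; -1, -I]

def symbolN (ℏ : ℝ) : Matrix (Fin 2) (Fin 2) ℂ := ((ℏ : ℂ) / I) • !![I, 1; -1, I]

def symbolR (ℏ : ℝ) : Matrix (Fin 2) (Fin 2) ℂ := ((ℏ : ℂ) ^ 2 / I) • !![-1, -I; -I, 1]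

section Representation

variable (N : ℕ) (ℏ : ℝ) (k l : Fin N)

theorem FL_eq_blockKron : FL N k l = blockKron symbolL (Ekl N k l) := by
  rw [FL, symbolL, blockKron_smul_left]
  congr 1
  simp [blockKron]

theorem FM_eq_blockKron : FM N ℏ k l = blockKron (symbolM ℏ) (Ekl N k l) := by
  rw [FM, symbolM, blockKron_smul_left]
  congr 1
  simp [blockKron]

theorem FNg_eq_blockKron : FNg N ℏ k l = blockKron (symbolN ℏ) (Ekl N k l) := by
  rw [FNg, symbolN, blockKron_smul_left]
  congr 1
  simp [blockKron]

theorem FR_eq_blockKron : FR N ℏ k l = blockKron (symbolR ℏ) (Ekl N k l) := by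
  rw [FR, symbolR, blockKron_smul_left]
  congr 1
  simp [blockKron]

end Representation

section MultiplicationTable

variable (ℏ : ℝ)

theorem symbolL_mul_symbolL : symbolL * symbolL = 0 := by
  simp [symbolL, ← Matrix.ext_iff]

theorem symbolL_mul_symbolM : symbolL * symbolM ℏ = 0 := by
  simp [symbolL, symbolM, ← Matrix.ext_iff]
  grind [I_mul_I]

theorem symbolM_mul_symbolL : symbolM ℏ * symbolL = (-2 * ℏ : ℂ) • symbolL := by
  simp [symbolL, symbolM]
  grind [I_mul_I]

theorem symbolL_mul_symbolN : symbolL * symbolN ℏ = (2 * ℏ : ℂ) • symbolL := by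
  simp [symbolL, symbolN]
  grind [I_mul_I]

theorem symbolN_mul_symbolL : symbolN ℏ * symbolL = 0 := by
  simp [symbolL, symbolN, ← Matrix.ext_iff]
  grind [I_mul_I]

theorem symbolL_mul_symbolR : symbolL * symbolR ℏ = (2 * ℏ : ℂ) • symbolM ℏ := by
  simp [symbolL, symbolR, symbolM]
  grind [I_mul_I]

theorem symbolR_mul_symbolL : symbolR ℏ * symbolL = (-2 * ℏ : ℂ) • symbolN ℏ := by
  simp [symbolL, symbolR, symbolN]
  grind [I_mul_I]

theorem symbolM_mul_symbolM : symbolM ℏ * symbolM ℏ = (-2 * ℏ : ℂ) • symbolM ℏ := by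
  simp [symbolM]
  grind [I_mul_I]

theorem symbolM_mul_symbolN : symbolM ℏ * symbolN ℏ = 0 := by
  simp [symbolM, symbolN, ← Matrix.ext_iff]
  grind [I_mul_I]

theorem symbolN_mul_symbolM : symbolN ℏ * symbolM ℏ = 0 := by
  simp [symbolM, symbolN, ← Matrix.ext_iff]
  grind [I_mul_I]

theorem symbolM_mul_symbolR : symbolM ℏ * symbolR ℏ = 0 := by
  simp [symbolM, symbolR, ← Matrix.ext_iff]
  grind [I_mul_I]

theorem symbolR_mul_symbolM : symbolR ℏ * symbolM ℏ = (-2 * ℏ : ℂ) • symbolR ℏ := by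
  simp [symbolM, symbolR]
  grind [I_mul_I]

theorem symbolN_mul_symbolN : symbolN ℏ * symbolN ℏ = (2 * ℏ : ℂ) • symbolN ℏ := by
  simp [symbolN]
  grind [I_mul_I]

theorem symbolN_mul_symbolR : symbolN ℏ * symbolR ℏ = (2 * ℏ : ℂ) • symbolR ℏ := by
  simp [symbolN, symbolR]
  grind [I_mul_I]

theorem symbolR_mul_symbolN : symbolR ℏ * symbolN ℏ = 0 := by
  simp [symbolN, symbolR, ← Matrix.ext_iff]
  grind [I_mul_I]

theorem symbolR_mul_symbolR : symbolR ℏ * symbolR ℏ = 0 := by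
  simp [symbolR, ← Matrix.ext_iff]
  grind [I_mul_I]

end MultiplicationTable

theorem stmt0_general (N : ℕ) (ℏ : ℝ) (k l m n : Fin N) :
    (FL N k l * FL N m n - FL N m n * FL N k l = 0) ∧
    (FL N k l * FM N ℏ m n - FM N ℏ m n * FL N k l
        = ((2 * (ℏ : ℂ)) * kd N k n) • FL N m l) ∧
    (FL N k l * FNg N ℏ m n - FNg N ℏ m n * FL N k l
        = ((2 * (ℏ : ℂ)) * kd N m l) • FL N k n) ∧
    (FL N k l * FR N ℏ m n - FR N ℏ m n * FL N k l
        = ((2 * (ℏ : ℂ)) * kd N k n) • FNg N ℏ m l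
          + ((2 * (ℏ : ℂ)) * kd N m l) • FM N ℏ k n) ∧
    (FM N ℏ k l * FM N ℏ m n - FM N ℏ m n * FM N ℏ k l
        = ((2 * (ℏ : ℂ)) * kd N k n) • FM N ℏ m l
          - ((2 * (ℏ : ℂ)) * kd N m l) • FM N ℏ k n) ∧
    (FM N ℏ k l * FNg N ℏ m n - FNg N ℏ m n * FM N ℏ k l = 0) ∧
    (FM N ℏ k l * FR N ℏ m n - FR N ℏ m n * FM N ℏ k l
        = ((2 * (ℏ : ℂ)) * kd N k n) • FR N ℏ m l) ∧
    (FNg N ℏ k l * FNg N ℏ m n - FNg N ℏ m n * FNg N ℏ k l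
        = ((2 * (ℏ : ℂ)) * kd N m l) • FNg N ℏ k n
          - ((2 * (ℏ : ℂ)) * kd N k n) • FNg N ℏ m l) ∧
    (FNg N ℏ k l * FR N ℏ m n - FR N ℏ m n * FNg N ℏ k l
        = ((2 * (ℏ : ℂ)) * kd N m l) • FR N ℏ k n) ∧
    (FR N ℏ k l * FR N ℏ m n - FR N ℏ m n * FR N ℏ k l = 0) := by
  refine ⟨?_, ?_, ?_, ?_, ?_, ?_, ?_, ?_, ?_, ?_⟩ <;>
    simp only [FL_eq_blockKron, FM_eq_blockKron, FNg_eq_blockKron, FR_eq_blockKron,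
      blockKron_Ekl_commutator, symbolL_mul_symbolL, symbolL_mul_symbolM, symbolM_mul_symbolL,
      symbolL_mul_symbolN, symbolN_mul_symbolL, symbolL_mul_symbolR, symbolR_mul_symbolL,
      symbolM_mul_symbolM, symbolM_mul_symbolN, symbolN_mul_symbolM, symbolM_mul_symbolR,
      symbolR_mul_symbolM, symbolN_mul_symbolN, symbolN_mul_symbolR, symbolR_mul_symbolN,
      symbolR_mul_symbolR, blockKron_zero_left, blockKron_smul_left] <;>
    module

/-- The map `F` intertwines the abstract bracket `(1/i)[·,·]` (given by the defining
relations of the observable Lie algebra) with the matrix commutator `[A,B] = AB − BA`: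
applying `F` to each of the ten defining relations yields a valid matrix identity. -/
theorem stmt0 (N : ℕ) (ℏ : ℝ) (hℏ : 0 < ℏ) (k l m n : Fin N) :
    (FL N k l * FL N m n - FL N m n * FL N k l = 0) ∧
    (FL N k l * FM N ℏ m n - FM N ℏ m n * FL N k l
        = ((2 * (ℏ : ℂ)) * kd N k n) • FL N m l) ∧
    (FL N k l * FNg N ℏ m n - FNg N ℏ m n * FL N k l
        = ((2 * (ℏ : ℂ)) * kd N m l) • FL N k n) ∧
    (FL N k l * FR N ℏ m n - FR N ℏ m n * FL N k l
        = ((2 * (ℏ : ℂ)) * kd N k n) • FNg N ℏ m l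
          + ((2 * (ℏ : ℂ)) * kd N m l) • FM N ℏ k n) ∧
    (FM N ℏ k l * FM N ℏ m n - FM N ℏ m n * FM N ℏ k l
        = ((2 * (ℏ : ℂ)) * kd N k n) • FM N ℏ m l
          - ((2 * (ℏ : ℂ)) * kd N m l) • FM N ℏ k n) ∧
    (FM N ℏ k l * FNg N ℏ m n - FNg N ℏ m n * FM N ℏ k l = 0) ∧
    (FM N ℏ k l * FR N ℏ m n - FR N ℏ m n * FM N ℏ k l
        = ((2 * (ℏ : ℂ)) * kd N k n) • FR N ℏ m l) ∧
    (FNg N ℏ k l * FNg N ℏ m n - FNg N ℏ m n * FNg N ℏ k l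
        = ((2 * (ℏ : ℂ)) * kd N m l) • FNg N ℏ k n
          - ((2 * (ℏ : ℂ)) * kd N k n) • FNg N ℏ m l) ∧
    (FNg N ℏ k l * FR N ℏ m n - FR N ℏ m n * FNg N ℏ k l
        = ((2 * (ℏ : ℂ)) * kd N m l) • FR N ℏ k n) ∧
    (FR N ℏ k l * FR N ℏ m n - FR N ℏ m n * FR N ℏ k l = 0) :=
  stmt0_general N ℏ k l m n

end
end

section
/- The map F of the previous construction is compatible with conjugations: defining the *-operation on the abstract generators by (L_{kl})* = L_{lk}, (M_{kl})* = N_{lk}, (N_{kl})* = M_{lk}, (R_{kl})* = R_{lk}, and on gl(2N,ℂ) by A* := −𝟙_{(N,N)} A† 𝟙_{(N,N)}, where 𝟙_{(N,N)} = diag(𝟙_N, −𝟙_N) and † is conjugate transpose, one has F(X*) = F(X)* for every generator X among L_{kl}, M_{kl}, N_{kl}, R_{kl}. -/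
open Matrix Complex

noncomputable section

/-- The signature matrix `𝟙_{(N,N)} = diag(𝟙_N, −𝟙_N)`. -/
def Jmat (N : ℕ) : Matrix (Fin N ⊕ Fin N) (Fin N ⊕ Fin N) ℂ :=
  fromBlocks 1 0 0 (-1)

/-- The conjugation `A* := −𝟙_{(N,N)} A† 𝟙_{(N,N)}` on `gl(2N,ℂ)`. -/
def starOp (N : ℕ) (A : Matrix (Fin N ⊕ Fin N) (Fin N ⊕ Fin N) ℂ) :
    Matrix (Fin N ⊕ Fin N) (Fin N ⊕ Fin N) ℂ :=
  -(Jmat N * Aᴴ * Jmat N)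

/-! Since the conjugation acts blockwise by `±ᴴ` (with the off-diagonal blocks swapped) and
`E_{kl}ᴴ = E_{lk}`, each identity reduces to identities of scalar coefficients, which hold
because `conj I = -I` and `ℏ` is real. -/

lemma conjTranspose_Ekl (N : ℕ) (k l : Fin N) : (Ekl N k l)ᴴ = Ekl N l k := by
  rw [Ekl, Ekl, conjTranspose_single, star_one]

lemma starOp_fromBlocks (N : ℕ) (A B C D : Matrix (Fin N) (Fin N) ℂ) :
    starOp N (fromBlocks A B C D) = fromBlocks (-Aᴴ) Cᴴ Bᴴ (-Dᴴ) := by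
  simp [starOp, Jmat, fromBlocks_conjTranspose, fromBlocks_multiply, fromBlocks_neg]

theorem stmt1_general (N : ℕ) (ℏ : ℝ) (k l : Fin N) :
    starOp N (FL N k l) = FL N l k ∧
    starOp N (FM N ℏ k l) = FNg N ℏ l k ∧
    starOp N (FNg N ℏ k l) = FM N ℏ l k ∧
    starOp N (FR N ℏ k l) = FR N ℏ l k := by
  refine ⟨?_, ?_, ?_, ?_⟩ <;>
  · simp only [FL, FM, FNg, FR, starOp_fromBlocks, conjTranspose_neg,
      conjTranspose_smul, conjTranspose_Ekl, fromBlocks_smul, fromBlocks_inj, Complex.star_def,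
      div_eq_mul_inv, inv_I, map_mul, map_neg, map_pow, conj_I, conj_ofReal]
    refine ⟨?_, ?_, ?_, ?_⟩ <;> match_scalars <;> ring

/-- `F` is compatible with the conjugations: `F(X*) = F(X)*` for each generator,
where `(L_{kl})* = L_{lk}`, `(M_{kl})* = N_{lk}`, `(N_{kl})* = M_{lk}`, `(R_{kl})* = R_{lk}`. -/
theorem stmt1 (N : ℕ) (ℏ : ℝ) (hℏ : 0 < ℏ) (k l : Fin N) :
    starOp N (FL N k l) = FL N l k ∧
    starOp N (FM N ℏ k l) = FNg N ℏ l k ∧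
    starOp N (FNg N ℏ k l) = FM N ℏ l k ∧
    starOp N (FR N ℏ k l) = FR N ℏ l k :=
  stmt1_general N ℏ k l

end
end

section
/- The set of 2N×2N complex matrices F(L_{kl}), F(M_{kl}), F(N_{kl}), F(R_{kl}) for k,l = 1,...,N (defined as in the identification above) spans gl(2N,ℂ) as a complex vector space; equivalently, the map F extends to a Lie algebra isomorphism onto gl(2N,ℂ). -/
/-!
Each `F(X_{kl})` is `B_X ⊗ E_{kl}` for a `2 × 2` matrix `B_X` independent of `k, l`. For `ℏ ≠ 0`
the four matrices `B_L, B_M, B_N, B_R` span `gl(2,ℂ)`, so the span of the `F(X_{kl})` contains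
`B ⊗ E_{kl}` for every `B`, in particular every matrix unit of `gl(2N,ℂ)`.
-/

open Matrix Complex

noncomputable section

namespace Matrix

variable {R m n : Type*}

theorem eq_top_of_single_one_mem [CommSemiring R] [Fintype m] [Fintype n] [DecidableEq m]
    [DecidableEq n] {p : Submodule R (Matrix m n R)} (h : ∀ i j, single i j 1 ∈ p) : p = ⊤ := by
  rw [eq_top_iff, ← (stdBasis R m n).span_eq, Submodule.span_le]
  rintro _ ⟨⟨i, j⟩, rfl⟩
  rw [stdBasis_eq_single]
  exact h i j

variable [CommSemiring R] [DecidableEq m] [DecidableEq n]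

/-- `blockSingle k l B` is the Kronecker product `B ⊗ E_{kl}`, written in `2 × 2` block form. -/
def blockSingle (k : m) (l : n) : Matrix (Fin 2) (Fin 2) R →ₗ[R] Matrix (m ⊕ m) (n ⊕ n) R where
  toFun B := fromBlocks (single k l (B 0 0)) (single k l (B 0 1)) (single k l (B 1 0))
    (single k l (B 1 1))
  map_add' B C := by simp [fromBlocks_add, single_add]
  map_smul' c B := by simp [fromBlocks_smul, smul_single]

theorem exists_single_one_mem_range_blockSingle (i : m ⊕ m) (j : n ⊕ n) :
    ∃ k l, single i j (1 : R) ∈ LinearMap.range (blockSingle k l) := by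
  rcases i with k | k <;> rcases j with l | l
  · exact ⟨k, l, single 0 0 1, by ext (_ | _) (_ | _) <;> simp [blockSingle, single_apply]⟩
  · exact ⟨k, l, single 0 1 1, by ext (_ | _) (_ | _) <;> simp [blockSingle, single_apply]⟩
  · exact ⟨k, l, single 1 0 1, by ext (_ | _) (_ | _) <;> simp [blockSingle, single_apply]⟩
  · exact ⟨k, l, single 1 1 1, by ext (_ | _) (_ | _) <;> simp [blockSingle, single_apply]⟩

end Matrix

def blockCoeffL : Matrix (Fin 2) (Fin 2) ℂ := !![I, 1; 1, -I]

def blockCoeffM (ℏ : ℝ) : Matrix (Fin 2) (Fin 2) ℂ := (ℏ : ℂ) • !![-1, -I; I, -1]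

def blockCoeffN (ℏ : ℝ) : Matrix (Fin 2) (Fin 2) ℂ := (ℏ : ℂ) • !![1, -I; I, 1]

def blockCoeffR (ℏ : ℝ) : Matrix (Fin 2) (Fin 2) ℂ := ((ℏ : ℂ) ^ 2) • !![I, -1; -1, -I]

section

variable (N : ℕ) (ℏ : ℝ) (k l : Fin N)

theorem FL_eq_blockSingle : FL N k l = blockSingle k l blockCoeffL := by
  simp [FL, Ekl, blockCoeffL, blockSingle, fromBlocks_smul, smul_single, fromBlocks_neg,
    ← single_neg]

theorem FM_eq_blockSingle : FM N ℏ k l = blockSingle k l (blockCoeffM ℏ) := by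
  simp [FM, Ekl, blockCoeffM, blockSingle, fromBlocks_smul, smul_single, fromBlocks_neg,
    ← single_neg, mul_assoc]

theorem FNg_eq_blockSingle : FNg N ℏ k l = blockSingle k l (blockCoeffN ℏ) := by
  simp [FNg, Ekl, blockCoeffN, blockSingle, fromBlocks_smul, smul_single, fromBlocks_neg,
    ← single_neg, mul_assoc]

theorem FR_eq_blockSingle : FR N ℏ k l = blockSingle k l (blockCoeffR ℏ) := by
  simp [FR, Ekl, blockCoeffR, blockSingle, fromBlocks_smul, smul_single, fromBlocks_neg,
    ← single_neg, mul_assoc]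

end

theorem span_blockCoeff_eq_top {ℏ : ℝ} (hℏ : ℏ ≠ 0) :
    Submodule.span ℂ (Set.range ![blockCoeffL, blockCoeffM ℏ, blockCoeffN ℏ, blockCoeffR ℏ]) =
      ⊤ := by
  have hc : (ℏ : ℂ) ≠ 0 := by exact_mod_cast hℏ
  refine eq_top_of_single_one_mem fun i j => (Submodule.mem_span_range_iff_exists_fun ℂ).2 ?_
  -- the coefficients of `E_{ij}` form the column `P⁻¹ e_{ij}`, where the columns of `P` are the
  -- entries of the four `B_X`
  fin_cases i <;> fin_cases j <;> [
    refine ⟨![-I / 4, -1 / (4 * ℏ), 1 / (4 * ℏ), -I / (4 * ℏ ^ 2)], ?_⟩;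
    refine ⟨![1 / 4, I / (4 * ℏ), I / (4 * ℏ), -1 / (4 * ℏ ^ 2)], ?_⟩;
    refine ⟨![1 / 4, -I / (4 * ℏ), -I / (4 * ℏ), -1 / (4 * ℏ ^ 2)], ?_⟩;
    refine ⟨![I / 4, -1 / (4 * ℏ), 1 / (4 * ℏ), I / (4 * ℏ ^ 2)], ?_⟩] <;>
  ext a b <;> fin_cases a <;> fin_cases b <;>
    simp [Fin.sum_univ_four, blockCoeffL, blockCoeffM, blockCoeffN, blockCoeffR] <;>
    field_simp <;> ring_nf <;> norm_num [I_sq]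

/-- The matrices `F(L_{kl}), F(M_{kl}), F(N_{kl}), F(R_{kl})`, `k,l = 1,…,N`, span
`gl(2N,ℂ)` as a complex vector space (so `F` extends to a Lie algebra isomorphism
onto `gl(2N,ℂ)`). -/
theorem stmt2 (N : ℕ) (ℏ : ℝ) (hℏ : ℏ ≠ 0) :
    Submodule.span ℂ
      {A : Matrix (Fin N ⊕ Fin N) (Fin N ⊕ Fin N) ℂ |
        ∃ k l : Fin N,
          A = FL N k l ∨ A = FM N ℏ k l ∨ A = FNg N ℏ k l ∨ A = FR N ℏ k l} = ⊤ := by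
  have range_le_span (k l : Fin N) : LinearMap.range (blockSingle k l) ≤ Submodule.span ℂ
      {A | ∃ k l : Fin N, A = FL N k l ∨ A = FM N ℏ k l ∨ A = FNg N ℏ k l ∨ A = FR N ℏ k l} := by
    rw [LinearMap.range_eq_map, ← span_blockCoeff_eq_top hℏ, Submodule.map_span]
    refine Submodule.span_mono ?_
    rintro _ ⟨_, ⟨m, rfl⟩, rfl⟩
    fin_cases m
    exacts [⟨k, l, .inl (FL_eq_blockSingle N k l).symm⟩,
      ⟨k, l, .inr <| .inl (FM_eq_blockSingle N ℏ k l).symm⟩,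
      ⟨k, l, .inr <| .inr <| .inl (FNg_eq_blockSingle N ℏ k l).symm⟩,
      ⟨k, l, .inr <| .inr <| .inr (FR_eq_blockSingle N ℏ k l).symm⟩]
  refine eq_top_of_single_one_mem fun i j => ?_
  obtain ⟨k, l, hkl⟩ := exists_single_one_mem_range_blockSingle (R := ℂ) i j
  exact range_le_span k l hkl

end
end

section
/- On the common dense domain D ⊂ L²(ℂ) of smooth functions vanishing identically in a neighbourhood of the two cuts (positive real and positive imaginary half-axes), the self-adjoint generators p_1, p_2 of the unitary groups U_1, U_2 act by (p_1 Ψ)(z) = φ_1(z)^{-1}(ℏ/i) ∂/∂(Re z)(φ_1(z)Ψ(z)) and (p_2 Ψ)(z) = φ_2(z)^{-1}(ℏ/i) ∂/∂(Im z)(φ_2(z)Ψ(z)), and these operators commute weakly on D: p_1 p_2 Ψ = p_2 p_1 Ψ for all Ψ ∈ D. -/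
open Complex MeasureTheory Real

noncomputable section

def arg1 (z : ℂ) : ℝ := if 0 < z.arg then z.arg else z.arg + 2 * π

def arg2 (z : ℂ) : ℝ := if π / 2 < arg1 z then arg1 z else arg1 z + 2 * π

def phi1 (c : ℝ) (z : ℂ) : ℂ := Complex.exp (I * c * arg1 z)

def phi2 (c : ℝ) (z : ℂ) : ℂ := Complex.exp (I * c * arg2 z)

def U1 (c ℏ : ℝ) (t : ℝ) (Ψ : ℂ → ℂ) : ℂ → ℂ :=
  fun z => (phi1 c z)⁻¹ * phi1 c (z + (t * ℏ : ℝ)) * Ψ (z + (t * ℏ : ℝ))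

def U2 (c ℏ : ℝ) (s : ℝ) (Ψ : ℂ → ℂ) : ℂ → ℂ :=
  fun z => (phi2 c z)⁻¹ * phi2 c (z + I * (s * ℏ : ℝ)) * Ψ (z + I * (s * ℏ : ℝ))

/-- Real-direction derivative `∂/∂(Re z)`. -/
def dRe (f : ℂ → ℂ) (z : ℂ) : ℂ := fderiv ℝ f z 1

/-- Imaginary-direction derivative `∂/∂(Im z)`. -/
def dIm (f : ℂ → ℂ) (z : ℂ) : ℂ := fderiv ℝ f z I

/-- `(p₁Ψ)(z) = φ₁(z)⁻¹ (ℏ/i) ∂/∂(Re z)(φ₁ Ψ)(z)`. -/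
def p1op (c ℏ : ℝ) (Ψ : ℂ → ℂ) (z : ℂ) : ℂ :=
  (phi1 c z)⁻¹ * ((ℏ : ℂ) / I) * dRe (fun w => phi1 c w * Ψ w) z

/-- `(p₂Ψ)(z) = φ₂(z)⁻¹ (ℏ/i) ∂/∂(Im z)(φ₂ Ψ)(z)`. -/
def p2op (c ℏ : ℝ) (Ψ : ℂ → ℂ) (z : ℂ) : ℂ :=
  (phi2 c z)⁻¹ * ((ℏ : ℂ) / I) * dIm (fun w => phi2 c w * Ψ w) z

/-- The common dense domain `D`: smooth functions vanishing identically in a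
neighbourhood of the two cuts (positive real and positive imaginary half-axes). -/
def InDomD (Ψ : ℂ → ℂ) : Prop :=
  ContDiff ℝ (⊤ : ℕ∞) Ψ ∧ ∃ ε > (0 : ℝ), ∀ z : ℂ,
    ((0 ≤ z.re ∧ |z.im| < ε) ∨ (0 ≤ z.im ∧ |z.re| < ε)) → Ψ z = 0

open Filter Topology Set

/-! ### helper lemmas -/

private lemma contDiffAt_arg' {x : ℂ} (h : 0 < x.re ∨ x.im ≠ 0) {n : WithTop ℕ∞} :
    ContDiffAt ℝ n Complex.arg x := by
  have hx : x ∈ Complex.slitPlane := Complex.mem_slitPlane_iff.2 h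
  have h1 : ContDiffAt ℝ n (fun z => (Complex.log z).im) x :=
    Complex.imCLM.contDiff.contDiffAt.comp x ((Complex.contDiffAt_log hx).restrict_scalars ℝ)
  simpa [Complex.log_im] using h1

private lemma dir_zero (f : ℂ → ℂ) (z v : ℂ) (δ : ℝ) (hδ : 0 < δ)
    (h : ∀ t : ℝ, 0 ≤ t → t < δ → f (z + (t : ℂ) * v) = 0) :
    fderiv ℝ f z v = 0 := by
  by_cases hd : DifferentiableAt ℝ f z
  · have h1 : HasDerivAt (fun t : ℝ => (t : ℂ)) 1 0 := by
      simpa using (hasDerivAt_id (0:ℝ)).ofReal_comp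
    have hline : HasDerivAt (fun t : ℝ => z + (t : ℂ) * v) v 0 := by
      simpa using (h1.mul_const v).const_add z
    have hc : HasDerivAt (fun t : ℝ => f (z + (t : ℂ) * v)) (fderiv ℝ f z v) 0 := by
      have := hd.hasFDerivAt.comp_hasDerivAt_of_eq 0 hline (by simp)
      simpa [Function.comp_def] using this
    have hw : HasDerivWithinAt (fun t : ℝ => f (z + (t : ℂ) * v)) (fderiv ℝ f z v)
        (Set.Ici 0) 0 := hc.hasDerivWithinAt
    have hw0 : HasDerivWithinAt (fun t : ℝ => f (z + (t : ℂ) * v)) 0 (Set.Ici 0) 0 := by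
      have hconst : HasDerivWithinAt (fun _ : ℝ => (0 : ℂ)) 0 (Set.Ici 0) 0 :=
        hasDerivWithinAt_const _ _ _
      apply hconst.congr_of_eventuallyEq ?_ ?_
      · apply Filter.eventuallyEq_of_mem (Ico_mem_nhdsGE hδ)
        intro t ht
        exact h t ht.1 ht.2
      · simpa using h 0 le_rfl hδ
    have hu : UniqueDiffWithinAt ℝ (Set.Ici (0:ℝ)) 0 := uniqueDiffOn_Ici 0 0 Set.self_mem_Ici
    have e1 := hw.derivWithin hu
    have e2 := hw0.derivWithin hu
    rw [e1] at e2
    exact e2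
  · rw [fderiv_zero_of_not_differentiableAt hd]
    simp

private lemma ev_zero_p1op {c ℏ : ℝ} {f : ℂ → ℂ} {z : ℂ}
    (h : ∀ᶠ w in 𝓝 z, f w = 0) : p1op c ℏ f z = 0 := by
  have h2 : (fun w => phi1 c w * f w) =ᶠ[𝓝 z] (fun _ => (0:ℂ)) :=
    h.mono fun w hw => by simp [hw]
  unfold p1op dRe
  rw [h2.fderiv_eq]
  simp

private lemma ev_zero_p2op {c ℏ : ℝ} {f : ℂ → ℂ} {z : ℂ}
    (h : ∀ᶠ w in 𝓝 z, f w = 0) : p2op c ℏ f z = 0 := by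
  have h2 : (fun w => phi2 c w * f w) =ᶠ[𝓝 z] (fun _ => (0:ℂ)) :=
    h.mono fun w hw => by simp [hw]
  unfold p2op dIm
  rw [h2.fderiv_eq]
  simp

private lemma hasDerivAt_zero_of_eventually {f : ℝ → ℂ} (h : ∀ᶠ t in 𝓝 (0:ℝ), f t = 0) :
    HasDerivAt f 0 0 :=
  (hasDerivAt_const (0:ℝ) (0:ℂ)).congr_of_eventuallyEq h


private lemma good1_case (c ℏ : ℝ) (Ψ : ℂ → ℂ) (z : ℂ) (U : Set ℂ)
    (hU : IsOpen U) (hz : z ∈ U) (h0 : ∀ w ∈ U, Ψ w = 0) :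
    HasDerivAt (fun t : ℝ => U1 c ℏ t Ψ z) (I * p1op c ℏ Ψ z) 0 ∧
    HasDerivAt (fun s : ℝ => U2 c ℏ s Ψ z) (I * p2op c ℏ Ψ z) 0 ∧
    p1op c ℏ (p2op c ℏ Ψ) z = p2op c ℏ (p1op c ℏ Ψ) z := by
  have hΨz : ∀ᶠ w in 𝓝 z, Ψ w = 0 := by
    filter_upwards [hU.mem_nhds hz] with w hw using h0 w hw
  refine ⟨?_, ?_, ?_⟩
  · have hp : p1op c ℏ Ψ z = 0 := ev_zero_p1op hΨz
    have hev : ∀ᶠ t : ℝ in 𝓝 0, U1 c ℏ t Ψ z = 0 := by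
      have hcont : ContinuousAt (fun t : ℝ => z + ((t * ℏ : ℝ) : ℂ)) 0 := by
        fun_prop
      have hmem : (fun t : ℝ => z + ((t * ℏ : ℝ) : ℂ)) ⁻¹' U ∈ 𝓝 (0:ℝ) :=
        hcont.preimage_mem_nhds (by simpa using hU.mem_nhds hz)
      filter_upwards [hmem] with t ht
      simp only [U1, h0 _ ht, mul_zero]
    rw [show I * p1op c ℏ Ψ z = 0 by rw [hp]; ring]
    exact hasDerivAt_zero_of_eventually hev
  · have hp : p2op c ℏ Ψ z = 0 := ev_zero_p2op hΨz
    have hev : ∀ᶠ s : ℝ in 𝓝 0, U2 c ℏ s Ψ z = 0 := by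
      have hcont : ContinuousAt (fun s : ℝ => z + I * ((s * ℏ : ℝ) : ℂ)) 0 := by
        fun_prop
      have hmem : (fun s : ℝ => z + I * ((s * ℏ : ℝ) : ℂ)) ⁻¹' U ∈ 𝓝 (0:ℝ) :=
        hcont.preimage_mem_nhds (by simpa using hU.mem_nhds hz)
      filter_upwards [hmem] with s hs
      simp only [U2, h0 _ hs, mul_zero]
    rw [show I * p2op c ℏ Ψ z = 0 by rw [hp]; ring]
    exact hasDerivAt_zero_of_eventually hev
  · have h1 : ∀ᶠ w in 𝓝 z, p2op c ℏ Ψ w = 0 := by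
      filter_upwards [hU.mem_nhds hz] with w hw
      exact ev_zero_p2op (by filter_upwards [hU.mem_nhds hw] with x hx using h0 x hx)
    have h2 : ∀ᶠ w in 𝓝 z, p1op c ℏ Ψ w = 0 := by
      filter_upwards [hU.mem_nhds hz] with w hw
      exact ev_zero_p1op (by filter_upwards [hU.mem_nhds hw] with x hx using h0 x hx)
    rw [ev_zero_p1op h1, ev_zero_p2op h2]


private lemma zero_case (c ℏ : ℝ) (hℏ : 0 < ℏ) (Ψ : ℂ → ℂ) (ε : ℝ) (hε : 0 < ε)
    (h0 : ∀ w : ℂ, ((0 ≤ w.re ∧ |w.im| < ε) ∨ (0 ≤ w.im ∧ |w.re| < ε)) → Ψ w = 0) :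
    HasDerivAt (fun t : ℝ => U1 c ℏ t Ψ 0) (I * p1op c ℏ Ψ 0) 0 ∧
    HasDerivAt (fun s : ℝ => U2 c ℏ s Ψ 0) (I * p2op c ℏ Ψ 0) 0 ∧
    p1op c ℏ (p2op c ℏ Ψ) 0 = p2op c ℏ (p1op c ℏ Ψ) 0 := by
  have hδ : 0 < ε / ℏ := div_pos hε hℏ
  have hIoo : Set.Ioo (-(ε/ℏ)) (ε/ℏ) ∈ 𝓝 (0:ℝ) := Ioo_mem_nhds (neg_lt_zero.2 hδ) hδ
  refine ⟨?_, ?_, ?_⟩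
  · -- p1op value is 0
    have hz1 : fderiv ℝ (fun w => phi1 c w * Ψ w) 0 1 = 0 := by
      apply dir_zero _ 0 1 ε hε
      intro t ht0 htε
      have : Ψ (0 + (t:ℂ) * 1) = 0 := by
        apply h0
        left
        constructor
        · simp [ht0]
        · simpa using hε
      simp only [this, mul_zero]
    have hp : I * p1op c ℏ Ψ 0 = 0 := by
      unfold p1op dRe
      rw [hz1]; ring
    rw [hp]
    apply hasDerivAt_zero_of_eventually
    filter_upwards [hIoo] with t ht
    have habs : |t| * ℏ < ε := by
      rw [Set.mem_Ioo] at ht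
      calc |t| * ℏ < (ε/ℏ) * ℏ := by
            apply mul_lt_mul_of_pos_right _ hℏ
            exact abs_lt.2 ⟨ht.1, ht.2⟩
        _ = ε := by field_simp
    have hψ : Ψ (0 + ((t * ℏ : ℝ) : ℂ)) = 0 := by
      apply h0
      right
      constructor
      · simp
      · simpa [abs_mul, abs_of_pos hℏ] using habs
    simp only [U1, hψ, mul_zero]
  · have hz2 : fderiv ℝ (fun w => phi2 c w * Ψ w) 0 I = 0 := by
      apply dir_zero _ 0 I ε hε
      intro t ht0 htε
      have : Ψ (0 + (t:ℂ) * I) = 0 := by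
        apply h0
        right
        constructor
        · simp [ht0]
        · simpa using hε
      simp only [this, mul_zero]
    have hp : I * p2op c ℏ Ψ 0 = 0 := by
      unfold p2op dIm
      rw [hz2]; ring
    rw [hp]
    apply hasDerivAt_zero_of_eventually
    filter_upwards [hIoo] with s hs
    have habs : |s| * ℏ < ε := by
      rw [Set.mem_Ioo] at hs
      calc |s| * ℏ < (ε/ℏ) * ℏ := by
            apply mul_lt_mul_of_pos_right _ hℏ
            exact abs_lt.2 ⟨hs.1, hs.2⟩
        _ = ε := by field_simp
    have hψ : Ψ (0 + I * ((s * ℏ : ℝ) : ℂ)) = 0 := by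
      rcases le_or_gt 0 s with h | h
      · apply h0; right
        constructor
        · simp; positivity
        · simpa using hε
      · apply h0; left
        constructor
        · simp
        · simpa [abs_mul, abs_of_pos hℏ] using habs
    simp only [U2, hψ, mul_zero]
  · -- commutator at 0
    have hseg1 : ∀ t : ℝ, |t| < ε → p2op c ℏ Ψ ((t:ℂ)) = 0 := by
      intro t ht
      have hf : fderiv ℝ (fun w => phi2 c w * Ψ w) (t:ℂ) I = 0 := by
        apply dir_zero _ _ I 1 one_pos
        intro s hs0 _
        have : Ψ ((t:ℂ) + (s:ℂ) * I) = 0 := by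
          apply h0; right
          constructor
          · simp [hs0]
          · simpa using ht
        simp only [this, mul_zero]
      unfold p2op dIm
      rw [hf]; ring
    have hseg2 : ∀ s : ℝ, |s| < ε → p1op c ℏ Ψ ((s:ℂ) * I) = 0 := by
      intro s hs
      have hf : fderiv ℝ (fun w => phi1 c w * Ψ w) ((s:ℂ) * I) 1 = 0 := by
        apply dir_zero _ _ 1 1 one_pos
        intro t ht0 _
        have : Ψ ((s:ℂ) * I + (t:ℂ) * 1) = 0 := by
          apply h0; left
          constructor
          · simp [ht0]
          · simpa using hs
        simp only [this, mul_zero]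
      unfold p1op dRe
      rw [hf]; ring
    have hL : fderiv ℝ (fun w => phi1 c w * p2op c ℏ Ψ w) 0 1 = 0 := by
      apply dir_zero _ 0 1 ε hε
      intro t ht0 htε
      have := hseg1 t (by rwa [_root_.abs_of_nonneg ht0])
      rw [show (0:ℂ) + (t:ℂ) * 1 = (t:ℂ) by ring, this, mul_zero]
    have hR : fderiv ℝ (fun w => phi2 c w * p1op c ℏ Ψ w) 0 I = 0 := by
      apply dir_zero _ 0 I ε hε
      intro s hs0 hsε
      have := hseg2 s (by rwa [_root_.abs_of_nonneg hs0])
      rw [show (0:ℂ) + (s:ℂ) * I = (s:ℂ) * I by ring, this, mul_zero]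
    show (phi1 c 0)⁻¹ * ((ℏ : ℂ) / I) * dRe (fun w => phi1 c w * p2op c ℏ Ψ w) 0 =
      (phi2 c 0)⁻¹ * ((ℏ : ℂ) / I) * dIm (fun w => phi2 c w * p1op c ℏ Ψ w) 0
    unfold dRe dIm
    rw [hL, hR]
    ring


private lemma arg1_V1 {w : ℂ} (h1 : 0 < w.re) (h2 : 0 < w.im) : arg1 w = w.arg + 0 := by
  unfold arg1
  have hpos : 0 < w.arg := by
    rcases (Complex.arg_nonneg_iff.2 h2.le).lt_or_eq with h | h
    · exact h
    · exact absurd (Complex.arg_eq_zero_iff.1 h.symm).2 (ne_of_gt h2)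
  rw [if_pos hpos, add_zero]

private lemma arg2_V1 {w : ℂ} (h1 : 0 < w.re) (h2 : 0 < w.im) : arg2 w = w.arg + 2 * π := by
  unfold arg2
  have hlt : arg1 w < π / 2 := by
    rw [arg1_V1 h1 h2, add_zero]
    exact Complex.arg_lt_pi_div_two_iff.2 (Or.inl h1)
  rw [if_neg (not_lt.2 hlt.le), arg1_V1 h1 h2, add_zero]

private lemma arg1_V2 {w : ℂ} (h : w.im < 0) : arg1 w = w.arg + 2 * π := by
  unfold arg1
  rw [if_neg (not_lt.2 (Complex.arg_neg_iff.2 h).le)]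

private lemma arg2_V2 {w : ℂ} (h : w.im < 0) : arg2 w = w.arg + 2 * π := by
  unfold arg2
  have hgt : π / 2 < arg1 w := by
    rw [arg1_V2 h]
    have h1 : -π < w.arg := Complex.neg_pi_lt_arg w
    have h2 : 0 < π := Real.pi_pos
    linarith
  rw [if_pos hgt, arg1_V2 h]

private lemma arg1_V3 {w : ℂ} (hw : w.re < 0) : arg1 w = (-w).arg + π := by
  unfold arg1
  rcases lt_trichotomy w.im 0 with h | h | h
  · rw [if_neg (not_lt.2 (Complex.arg_neg_iff.2 h).le),
      Complex.arg_neg_eq_arg_add_pi_of_im_neg h]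
    ring
  · have hπ : w.arg = π := Complex.arg_eq_pi_iff.2 ⟨hw, h⟩
    have hz : (-w).arg = 0 := by
      apply Complex.arg_eq_zero_iff.2
      constructor
      · simpa using hw.le
      · simpa using h
    rw [if_pos (hπ ▸ Real.pi_pos), hπ, hz, zero_add]
  · have hpos : 0 < w.arg := by
      rcases (Complex.arg_nonneg_iff.2 h.le).lt_or_eq with hh | hh
      · exact hh
      · exact absurd (Complex.arg_eq_zero_iff.1 hh.symm).2 (ne_of_gt h)
    rw [if_pos hpos, Complex.arg_neg_eq_arg_sub_pi_of_im_pos h]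
    ring

private lemma arg2_V3 {w : ℂ} (hw : w.re < 0) : arg2 w = (-w).arg + π := by
  unfold arg2
  have hgt : π / 2 < arg1 w := by
    rw [arg1_V3 hw]
    have : -(π/2) < (-w).arg := by
      apply Complex.neg_pi_div_two_lt_arg_iff.2
      left
      simpa using hw
    linarith
  rw [if_pos hgt, arg1_V3 hw]

private lemma classify (Ψ : ℂ → ℂ) (ε : ℝ) (hε : 0 < ε)
    (h0 : ∀ w : ℂ, ((0 ≤ w.re ∧ |w.im| < ε) ∨ (0 ≤ w.im ∧ |w.re| < ε)) → Ψ w = 0) (z : ℂ) :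
    z = 0 ∨
    (∃ U : Set ℂ, IsOpen U ∧ z ∈ U ∧ ∀ w ∈ U, Ψ w = 0) ∨
    (∃ (U : Set ℂ) (θ : ℂ → ℝ) (a1 a2 : ℝ), IsOpen U ∧ z ∈ U ∧
      (∀ w ∈ U, ContDiffAt ℝ (⊤ : ℕ∞) θ w) ∧ (∀ w ∈ U, arg1 w = θ w + a1) ∧
      (∀ w ∈ U, arg2 w = θ w + a2)) := by
  by_cases hz : z = 0
  · exact Or.inl hz
  right
  by_cases hcut1 : 0 ≤ z.re ∧ z.im = 0
  · -- on positive real cut, z ≠ 0 so z.re > 0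
    have hre : 0 < z.re := by
      rcases hcut1.1.lt_or_eq with h | h
      · exact h
      · exact absurd (Complex.ext h.symm hcut1.2) hz
    left
    refine ⟨{w | 0 < w.re ∧ |w.im| < ε}, ?_, ⟨hre, by rw [hcut1.2]; simpa using hε⟩, ?_⟩
    · exact (isOpen_lt continuous_const Complex.continuous_re).inter
        (isOpen_lt (continuous_abs.comp Complex.continuous_im) continuous_const)
    · intro w hw
      exact h0 w (Or.inl ⟨hw.1.le, hw.2⟩)
  by_cases hcut2 : 0 ≤ z.im ∧ z.re = 0
  · have him : 0 < z.im := by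
      rcases hcut2.1.lt_or_eq with h | h
      · exact h
      · exact absurd (Complex.ext hcut2.2 h.symm) hz
    left
    refine ⟨{w | 0 < w.im ∧ |w.re| < ε}, ?_, ⟨him, by rw [hcut2.2]; simpa using hε⟩, ?_⟩
    · exact (isOpen_lt continuous_const Complex.continuous_im).inter
        (isOpen_lt (continuous_abs.comp Complex.continuous_re) continuous_const)
    · intro w hw
      exact h0 w (Or.inr ⟨hw.1.le, hw.2⟩)
  right
  -- z is off both cuts
  have hV3 : z.re < 0 → ∃ (U : Set ℂ) (θ : ℂ → ℝ) (a1 a2 : ℝ), IsOpen U ∧ z ∈ U ∧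
      (∀ w ∈ U, ContDiffAt ℝ (⊤ : ℕ∞) θ w) ∧ (∀ w ∈ U, arg1 w = θ w + a1) ∧
      (∀ w ∈ U, arg2 w = θ w + a2) := by
    intro hre
    refine ⟨{w | w.re < 0}, fun w => (-w).arg, π, π,
      isOpen_lt Complex.continuous_re continuous_const, hre, ?_, ?_, ?_⟩
    · intro w hw
      have h1 : ContDiffAt ℝ (⊤ : ℕ∞) Complex.arg (-w) := contDiffAt_arg' (Or.inl (by simpa using hw))
      exact h1.comp w (contDiff_neg.contDiffAt)
    · intro w hw
      exact arg1_V3 hw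
    · intro w hw
      exact arg2_V3 hw
  rcases lt_trichotomy z.im 0 with him | him | him
  · refine ⟨{w | w.im < 0}, Complex.arg, 2*π, 2*π,
      isOpen_lt Complex.continuous_im continuous_const, him, ?_, ?_, ?_⟩
    · intro w hw
      exact contDiffAt_arg' (Or.inr (ne_of_lt hw))
    · intro w hw
      exact arg1_V2 hw
    · intro w hw
      exact arg2_V2 hw
  · have hre : z.re < 0 := by
      rcases lt_trichotomy z.re 0 with h | h | h
      · exact h
      · exact absurd (Complex.ext h him) hz
      · exact absurd ⟨h.le, him⟩ hcut1
    exact hV3 hre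
  · have hre : z.re ≠ 0 := fun h => hcut2 ⟨him.le, h⟩
    rcases hre.lt_or_gt with h | h
    · exact hV3 h
    · refine ⟨{w | 0 < w.re ∧ 0 < w.im}, Complex.arg, 0, 2*π,
        (isOpen_lt continuous_const Complex.continuous_re).inter
          (isOpen_lt continuous_const Complex.continuous_im), ⟨h, him⟩, ?_, ?_, ?_⟩
      · intro w hw
        exact contDiffAt_arg' (Or.inl hw.1)
      · intro w hw
        exact arg1_V1 hw.1 hw.2
      · intro w hw
        exact arg2_V1 hw.1 hw.2


private lemma good2_case (c ℏ : ℝ) (Ψ : ℂ → ℂ) (hΨ : ContDiff ℝ (⊤ : ℕ∞) Ψ) (z : ℂ)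
    (U : Set ℂ) (θ : ℂ → ℝ) (a1 a2 : ℝ) (hU : IsOpen U) (hz : z ∈ U)
    (hθ : ∀ w ∈ U, ContDiffAt ℝ (⊤ : ℕ∞) θ w)
    (h1 : ∀ w ∈ U, arg1 w = θ w + a1) (h2 : ∀ w ∈ U, arg2 w = θ w + a2) :
    HasDerivAt (fun t : ℝ => U1 c ℏ t Ψ z) (I * p1op c ℏ Ψ z) 0 ∧
    HasDerivAt (fun s : ℝ => U2 c ℏ s Ψ z) (I * p2op c ℏ Ψ z) 0 ∧
    p1op c ℏ (p2op c ℏ Ψ) z = p2op c ℏ (p1op c ℏ Ψ) z := by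
  set φ : ℂ → ℂ := fun w => Complex.exp (I * c * (θ w : ℂ)) with hφdef
  set k1 : ℂ := Complex.exp (I * c * (a1 : ℂ)) with hk1def
  set k2 : ℂ := Complex.exp (I * c * (a2 : ℂ)) with hk2def
  set F : ℂ → ℂ := fun w => φ w * Ψ w with hFdef
  have hk1 : k1 ≠ 0 := Complex.exp_ne_zero _
  have hk2 : k2 ≠ 0 := Complex.exp_ne_zero _
  have hφne : ∀ w, φ w ≠ 0 := fun w => Complex.exp_ne_zero _
  have hφc : ∀ w ∈ U, ContDiffAt ℝ (⊤ : ℕ∞) φ w := by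
    intro w hw
    apply ContDiffAt.cexp
    exact (contDiffAt_const (c := I * (c:ℂ))).mul
      ((Complex.ofRealCLM.contDiff.contDiffAt).comp w (hθ w hw))
  have hFc : ∀ w ∈ U, ContDiffAt ℝ (⊤ : ℕ∞) F w := fun w hw => (hφc w hw).mul hΨ.contDiffAt
  have hFd : ∀ w ∈ U, DifferentiableAt ℝ F w := fun w hw =>
    (hFc w hw).differentiableAt (by simp)
  have hphi1 : ∀ w ∈ U, phi1 c w = k1 * φ w := by
    intro w hw
    unfold phi1
    rw [h1 w hw]
    push_cast
    rw [mul_add, Complex.exp_add]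
    ring
  have hphi2 : ∀ w ∈ U, phi2 c w = k2 * φ w := by
    intro w hw
    unfold phi2
    rw [h2 w hw]
    push_cast
    rw [mul_add, Complex.exp_add]
    ring
  have hre : ∀ w ∈ U, fderiv ℝ (fun x => phi1 c x * Ψ x) w = k1 • fderiv ℝ F w := by
    intro w hw
    have he : (fun x => phi1 c x * Ψ x) =ᶠ[𝓝 w] (fun x => k1 * F x) := by
      filter_upwards [hU.mem_nhds hw] with x hx
      rw [hphi1 x hx, hFdef]
      ring
    rw [he.fderiv_eq, fderiv_const_mul (hFd w hw) k1]
  have him : ∀ w ∈ U, fderiv ℝ (fun x => phi2 c x * Ψ x) w = k2 • fderiv ℝ F w := by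
    intro w hw
    have he : (fun x => phi2 c x * Ψ x) =ᶠ[𝓝 w] (fun x => k2 * F x) := by
      filter_upwards [hU.mem_nhds hw] with x hx
      rw [hphi2 x hx, hFdef]
      ring
    rw [he.fderiv_eq, fderiv_const_mul (hFd w hw) k2]
  have hp1 : ∀ w ∈ U, p1op c ℏ Ψ w = (φ w)⁻¹ * ((ℏ:ℂ)/I) * fderiv ℝ F w 1 := by
    intro w hw
    unfold p1op dRe
    rw [hre w hw, hphi1 w hw, mul_inv]
    simp only [ContinuousLinearMap.smul_apply, smul_eq_mul]
    field_simp [hk1, hφne w, Complex.I_ne_zero]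
  have hp2 : ∀ w ∈ U, p2op c ℏ Ψ w = (φ w)⁻¹ * ((ℏ:ℂ)/I) * fderiv ℝ F w I := by
    intro w hw
    unfold p2op dIm
    rw [him w hw, hphi2 w hw, mul_inv]
    simp only [ContinuousLinearMap.smul_apply, smul_eq_mul]
    field_simp [hk2, hφne w, Complex.I_ne_zero]
  refine ⟨?_, ?_, ?_⟩
  · -- derivative of U1 in t
    have hev : ∀ᶠ t : ℝ in 𝓝 0, z + ((t * ℏ : ℝ) : ℂ) ∈ U := by
      have hcont : ContinuousAt (fun t : ℝ => z + ((t * ℏ : ℝ) : ℂ)) 0 := by fun_prop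
      have := hcont.preimage_mem_nhds (by simpa using hU.mem_nhds hz)
      filter_upwards [this] with t ht using ht
    have hlinpre : HasDerivAt (fun t : ℝ => ((t * ℏ : ℝ) : ℂ)) (ℏ:ℂ) 0 := by
      have ha : HasDerivAt (fun t : ℝ => t * ℏ) ℏ 0 := by
        simpa using (hasDerivAt_id (0:ℝ)).mul_const ℏ
      have := Complex.ofRealCLM.hasFDerivAt.comp_hasDerivAt 0 ha
      simpa [Function.comp_def, Complex.ofRealCLM_apply] using this
    have hlin : HasDerivAt (fun t : ℝ => z + ((t * ℏ : ℝ) : ℂ)) (ℏ:ℂ) 0 :=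
      hlinpre.const_add z
    have hcomp : HasDerivAt (fun t : ℝ => F (z + ((t * ℏ : ℝ) : ℂ))) (fderiv ℝ F z (ℏ:ℂ)) 0 := by
      have := (hFd z hz).hasFDerivAt.comp_hasDerivAt_of_eq 0 hlin (by simp)
      simpa [Function.comp_def] using this
    have hF1 : fderiv ℝ F z (ℏ:ℂ) = (ℏ:ℂ) * fderiv ℝ F z 1 := by
      have hsm : ((ℏ:ℝ) • (1:ℂ)) = (ℏ:ℂ) := by simp [Complex.real_smul]
      rw [← hsm, (fderiv ℝ F z).map_smul]
      simp [Complex.real_smul]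
    rw [hF1] at hcomp
    have hmain := hcomp.const_mul ((phi1 c z)⁻¹ * k1)
    have heq : (fun t : ℝ => U1 c ℏ t Ψ z) =ᶠ[𝓝 0]
        (fun t : ℝ => (phi1 c z)⁻¹ * k1 * F (z + ((t * ℏ : ℝ) : ℂ))) := by
      filter_upwards [hev] with t ht
      simp only [U1, hFdef]
      rw [hphi1 _ ht]
      ring
    have hval : I * p1op c ℏ Ψ z = (phi1 c z)⁻¹ * k1 * ((ℏ:ℂ) * fderiv ℝ F z 1) := by
      rw [hp1 z hz, hphi1 z hz, mul_inv]
      field_simp [hk1, hφne z, Complex.I_ne_zero]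
    rw [hval]
    exact hmain.congr_of_eventuallyEq heq
  · -- derivative of U2 in s
    have hev : ∀ᶠ s : ℝ in 𝓝 0, z + I * ((s * ℏ : ℝ) : ℂ) ∈ U := by
      have hcont : ContinuousAt (fun s : ℝ => z + I * ((s * ℏ : ℝ) : ℂ)) 0 := by fun_prop
      have := hcont.preimage_mem_nhds (by simpa using hU.mem_nhds hz)
      filter_upwards [this] with s hs using hs
    have hlinpre : HasDerivAt (fun s : ℝ => ((s * ℏ : ℝ) : ℂ)) (ℏ:ℂ) 0 := by
      have ha : HasDerivAt (fun s : ℝ => s * ℏ) ℏ 0 := by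
        simpa using (hasDerivAt_id (0:ℝ)).mul_const ℏ
      have := Complex.ofRealCLM.hasFDerivAt.comp_hasDerivAt 0 ha
      simpa [Function.comp_def, Complex.ofRealCLM_apply] using this
    have hlin : HasDerivAt (fun s : ℝ => z + I * ((s * ℏ : ℝ) : ℂ)) (I * (ℏ:ℂ)) 0 :=
      (hlinpre.const_mul I).const_add z
    have hcomp : HasDerivAt (fun s : ℝ => F (z + I * ((s * ℏ : ℝ) : ℂ)))
        (fderiv ℝ F z (I * (ℏ:ℂ))) 0 := by
      have := (hFd z hz).hasFDerivAt.comp_hasDerivAt_of_eq 0 hlin (by simp)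
      simpa [Function.comp_def] using this
    have hF1 : fderiv ℝ F z (I * (ℏ:ℂ)) = (ℏ:ℂ) * fderiv ℝ F z I := by
      have hsm : ((ℏ:ℝ) • (I:ℂ)) = I * (ℏ:ℂ) := by
        rw [Complex.real_smul]; ring
      rw [← hsm, (fderiv ℝ F z).map_smul]
      simp [Complex.real_smul]
    rw [hF1] at hcomp
    have hmain := hcomp.const_mul ((phi2 c z)⁻¹ * k2)
    have heq : (fun s : ℝ => U2 c ℏ s Ψ z) =ᶠ[𝓝 0]
        (fun s : ℝ => (phi2 c z)⁻¹ * k2 * F (z + I * ((s * ℏ : ℝ) : ℂ))) := by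
      filter_upwards [hev] with s hs
      simp only [U2, hFdef]
      rw [hphi2 _ hs]
      ring
    have hval : I * p2op c ℏ Ψ z = (phi2 c z)⁻¹ * k2 * ((ℏ:ℂ) * fderiv ℝ F z I) := by
      rw [hp2 z hz, hphi2 z hz, mul_inv]
      field_simp [hk2, hφne z, Complex.I_ne_zero]
    rw [hval]
    exact hmain.congr_of_eventuallyEq heq
  · -- commutation of the two operators
    have hFC2 : ContDiffAt ℝ 1 (fderiv ℝ F) z := (hFc z hz).fderiv_right (by exact WithTop.coe_le_coe.2 le_top)
    have hFd2 : DifferentiableAt ℝ (fderiv ℝ F) z := hFC2.differentiableAt one_ne_zero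
    have hsym : fderiv ℝ (fderiv ℝ F) z 1 I = fderiv ℝ (fderiv ℝ F) z I 1 :=
      ((hFc z hz).isSymmSndFDerivAt (by rw [minSmoothness_of_isRCLikeNormedField]; exact WithTop.coe_le_coe.2 le_top)) 1 I
    have hAI : DifferentiableAt ℝ (fun w => fderiv ℝ F w I) z :=
      (hFC2.clm_apply contDiffAt_const).differentiableAt one_ne_zero
    have hA1 : DifferentiableAt ℝ (fun w => fderiv ℝ F w 1) z :=
      (hFC2.clm_apply contDiffAt_const).differentiableAt one_ne_zero
    have keyI : fderiv ℝ (fun w => fderiv ℝ F w I) z 1 = fderiv ℝ (fderiv ℝ F) z 1 I := by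
      rw [fderiv_clm_apply hFd2 (differentiableAt_const I)]
      simp
    have key1 : fderiv ℝ (fun w => fderiv ℝ F w 1) z I = fderiv ℝ (fderiv ℝ F) z I 1 := by
      rw [fderiv_clm_apply hFd2 (differentiableAt_const (1:ℂ))]
      simp
    -- left hand side
    have hEL : (fun w => phi1 c w * p2op c ℏ Ψ w) =ᶠ[𝓝 z]
        (fun w => (k1 * ((ℏ:ℂ)/I)) * fderiv ℝ F w I) := by
      filter_upwards [hU.mem_nhds hz] with w hw
      rw [hp2 w hw, hphi1 w hw]
      field_simp [hφne w, Complex.I_ne_zero]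
    have hER : (fun w => phi2 c w * p1op c ℏ Ψ w) =ᶠ[𝓝 z]
        (fun w => (k2 * ((ℏ:ℂ)/I)) * fderiv ℝ F w 1) := by
      filter_upwards [hU.mem_nhds hz] with w hw
      rw [hp1 w hw, hphi2 w hw]
      field_simp [hφne w, Complex.I_ne_zero]
    have hL : p1op c ℏ (p2op c ℏ Ψ) z =
        (phi1 c z)⁻¹ * ((ℏ:ℂ)/I) * ((k1 * ((ℏ:ℂ)/I)) * fderiv ℝ (fderiv ℝ F) z 1 I) := by
      unfold p1op dRe
      rw [hEL.fderiv_eq, fderiv_const_mul hAI (k1 * ((ℏ:ℂ)/I))]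
      simp only [ContinuousLinearMap.smul_apply, smul_eq_mul]
      rw [keyI]
    have hR : p2op c ℏ (p1op c ℏ Ψ) z =
        (phi2 c z)⁻¹ * ((ℏ:ℂ)/I) * ((k2 * ((ℏ:ℂ)/I)) * fderiv ℝ (fderiv ℝ F) z I 1) := by
      unfold p2op dIm
      rw [hER.fderiv_eq, fderiv_const_mul hA1 (k2 * ((ℏ:ℂ)/I))]
      simp only [ContinuousLinearMap.smul_apply, smul_eq_mul]
      rw [key1]
    rw [hL, hR, hphi1 z hz, hphi2 z hz, hsym, mul_inv, mul_inv]
    field_simp [hk1, hk2, hφne z, Complex.I_ne_zero, Complex.I_sq]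


/-- On the domain `D` the generators `p₁, p₂` of `U₁, U₂` (i.e. `U_a(t) = exp(itp_a)`,
so `d/dt U_a(t)Ψ|_{t=0} = i p_a Ψ`) act by the stated differential expressions, and they
commute weakly on `D`: `p₁p₂Ψ = p₂p₁Ψ`. -/
theorem stmt10 (c ℏ : ℝ) (hℏ : 0 < ℏ) (Ψ : ℂ → ℂ) (hΨ : InDomD Ψ) :
    (∀ z : ℂ, HasDerivAt (fun t : ℝ => U1 c ℏ t Ψ z) (I * p1op c ℏ Ψ z) 0) ∧
    (∀ z : ℂ, HasDerivAt (fun s : ℝ => U2 c ℏ s Ψ z) (I * p2op c ℏ Ψ z) 0) ∧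
    (∀ z : ℂ, p1op c ℏ (p2op c ℏ Ψ) z = p2op c ℏ (p1op c ℏ Ψ) z) := by
  obtain ⟨hsm, ε, hε, h0⟩ := hΨ
  have main : ∀ z : ℂ,
      HasDerivAt (fun t : ℝ => U1 c ℏ t Ψ z) (I * p1op c ℏ Ψ z) 0 ∧
      HasDerivAt (fun s : ℝ => U2 c ℏ s Ψ z) (I * p2op c ℏ Ψ z) 0 ∧
      p1op c ℏ (p2op c ℏ Ψ) z = p2op c ℏ (p1op c ℏ Ψ) z := by
    intro z
    rcases classify Ψ ε hε h0 z with hz | ⟨U, hU, hzU, hU0⟩ |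
      ⟨U, θ, a1, a2, hU, hzU, hθ, ha1, ha2⟩
    · subst hz
      exact zero_case c ℏ hℏ Ψ ε hε h0
    · exact good1_case c ℏ Ψ z U hU hzU hU0
    · exact good2_case c ℏ Ψ hsm z U θ a1 a2 hU hzU hθ ha1 ha2
  exact ⟨fun z => (main z).1, fun z => (main z).2.1, fun z => (main z).2.2⟩

end
end
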